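/- For every ζ ∈ ℂ with |ζ| = 1, the sequence defined by θ_0 := 0 and θ_{k+1} := a_{−1}(ζ) + a_0(ζ)θ_k + a_1(ζ)θ_k² converges to a limit θ(ζ) satisfying |θ(ζ)| ≤ 1 and a_1(ζ)θ(ζ)² + (a_0(ζ)−1)θ(ζ) + a_{−1}(ζ) = 0. Moreover, if a_{−1}(1) + a_1(1) > 0 then θ(1) = 1 if and only if a_{−1}(1) ≥ a_1(1); and if a_{−1}(1) < a_1(1) then θ(1) = a_{−1}(1)/a_1(1). -/

import Mathlib

/-!
Let `f(x) = a_{-1}(ζ) + a_0(ζ) x + a_1(ζ) x²` and `F(x) = A_{-1} + A_0 x + A_1 x²` with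
`A_i = a_i(1) ≥ ‖a_i(ζ)‖`. Since `f z - f w = (a_0 + a_1 (z + w)) (z - w)`, the real iteration of
`F` majorizes the complex one: `‖f^[n+1] 0 - f^[n] 0‖ ≤ F^[n+1] 0 - F^[n] 0`. On `[0, ∞)` the map
`F` is monotone, so `F^[n] 0` increases and stays below every `q ≥ 0` with `F q ≤ q`, e.g. `q = 1`.
Hence both iterations converge, to fixed points. At `ζ = 1` the limit is the least nonnegative root
of `F x = x`, i.e. of `(x - 1) (A_1 x - A_{-1}) = 0`.
-/

open Filter Topology

/- Convention: the transition probabilities a_{i,j} (i,j ∈ {−1,0,1}) are encoded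
as `v : Fin 3 → Fin 3 → ℝ`, where the index `0, 1, 2` corresponds to `−1, 0, 1`. -/

/-- `symb v i z = a_i(z) = a_{i,−1} z⁻¹ + a_{i,0} + a_{i,1} z`. -/
noncomputable def symb (v : Fin 3 → Fin 3 → ℝ) (i : Fin 3) (z : ℂ) : ℂ :=
  (v i 0 : ℂ) * z⁻¹ + (v i 1 : ℂ) + (v i 2 : ℂ) * z

/-- `symbOne v i = a_i(1) = a_{i,−1} + a_{i,0} + a_{i,1}` (as a real number). -/
def symbOne (v : Fin 3 → Fin 3 → ℝ) (i : Fin 3) : ℝ := v i 0 + v i 1 + v i 2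

/-- The fixed-point iteration θ_0 = 0, θ_{k+1} = a_{−1}(ζ) + a_0(ζ) θ_k + a_1(ζ) θ_k². -/
noncomputable def quadIter (am1 a0 a1 : ℂ) : ℕ → ℂ
  | 0 => 0
  | k + 1 => am1 + a0 * quadIter am1 a0 a1 k + a1 * (quadIter am1 a0 a1 k) ^ 2

open Function

def quadMap {R : Type*} [Semiring R] (a0 a1 a2 x : R) : R := a0 + a1 * x + a2 * x ^ 2

lemma quadIter_eq_iterate (a0 a1 a2 : ℂ) :
    quadIter a0 a1 a2 = fun n ↦ (quadMap a0 a1 a2)^[n] 0 := by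
  funext n
  induction n with
  | zero => rfl
  | succ n ih => rw [iterate_succ_apply', ← ih]; rfl

lemma continuous_quadMap {R : Type*} [Semiring R] [TopologicalSpace R] [IsTopologicalSemiring R]
    (a0 a1 a2 : R) : Continuous (quadMap a0 a1 a2) := by
  unfold quadMap; fun_prop

lemma cauchySeq_of_norm_sub_le_sub {E : Type*} [SeminormedAddCommGroup E] {f : ℕ → E}
    {g : ℕ → ℝ} {c : ℝ} (hg : ∀ n, g n ≤ c) (hfg : ∀ n, ‖f (n + 1) - f n‖ ≤ g (n + 1) - g n) :
    CauchySeq f := by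
  refine cauchySeq_of_dist_le_of_summable (fun n ↦ g (n + 1) - g n)
    (fun n ↦ by simpa [dist_eq_norm'] using hfg n) ?_
  refine summable_of_sum_range_le (c := c - g 0) (fun n ↦ (norm_nonneg _).trans (hfg n)) ?_
  intro n
  rw [Finset.sum_range_sub]
  linarith [hg n]

section RealIteration

variable {A0 A1 A2 : ℝ}

lemma quadMap_nonneg (h0 : 0 ≤ A0) (h1 : 0 ≤ A1) (h2 : 0 ≤ A2) {x : ℝ} (hx : 0 ≤ x) :
    0 ≤ quadMap A0 A1 A2 x := by
  unfold quadMap; positivity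

lemma quadMap_le_quadMap (h1 : 0 ≤ A1) (h2 : 0 ≤ A2) {x y : ℝ} (hx : 0 ≤ x) (hxy : x ≤ y) :
    quadMap A0 A1 A2 x ≤ quadMap A0 A1 A2 y := by
  unfold quadMap; gcongr

lemma iterate_quadMap_nonneg (h0 : 0 ≤ A0) (h1 : 0 ≤ A1) (h2 : 0 ≤ A2) (n : ℕ) :
    0 ≤ (quadMap A0 A1 A2)^[n] 0 := by
  induction n with
  | zero => rfl
  | succ n ih => rw [iterate_succ_apply']; exact quadMap_nonneg h0 h1 h2 ih

lemma monotone_iterate_quadMap (h0 : 0 ≤ A0) (h1 : 0 ≤ A1) (h2 : 0 ≤ A2) :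
    Monotone fun n ↦ (quadMap A0 A1 A2)^[n] 0 := by
  refine monotone_nat_of_le_succ fun n ↦ ?_
  induction n with
  | zero => exact quadMap_nonneg h0 h1 h2 le_rfl
  | succ n ih =>
    rw [iterate_succ_apply', iterate_succ_apply' _ (n + 1)]
    exact quadMap_le_quadMap h1 h2 (iterate_quadMap_nonneg h0 h1 h2 n) ih

lemma iterate_quadMap_le (h0 : 0 ≤ A0) (h1 : 0 ≤ A1) (h2 : 0 ≤ A2) {q : ℝ} (hq : 0 ≤ q)
    (hFq : quadMap A0 A1 A2 q ≤ q) (n : ℕ) : (quadMap A0 A1 A2)^[n] 0 ≤ q := by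
  induction n with
  | zero => exact hq
  | succ n ih =>
    rw [iterate_succ_apply']
    exact (quadMap_le_quadMap h1 h2 (iterate_quadMap_nonneg h0 h1 h2 n) ih).trans hFq

lemma quadMap_one (hs : A0 + A1 + A2 = 1) : quadMap A0 A1 A2 1 = 1 := by
  simp [quadMap, hs]

lemma tendsto_iterate_quadMap_of_sum_eq_one (h0 : 0 ≤ A0) (h1 : 0 ≤ A1) (h2 : 0 ≤ A2)
    (hs : A0 + A1 + A2 = 1) : ∃ L, Tendsto (fun n ↦ (quadMap A0 A1 A2)^[n] 0) atTop (𝓝 L) :=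
  ⟨_, tendsto_atTop_ciSup (monotone_iterate_quadMap h0 h1 h2)
    ⟨1, Set.forall_mem_range.mpr (iterate_quadMap_le h0 h1 h2 zero_le_one (quadMap_one hs).le)⟩⟩

lemma quadMap_div (hs : A0 + A1 + A2 = 1) (hA2 : A2 ≠ 0) :
    quadMap A0 A1 A2 (A0 / A2) = A0 / A2 := by
  unfold quadMap
  rw [show A1 = 1 - A0 - A2 by linarith]
  field_simp
  ring

lemma eq_one_or_mul_eq_of_isFixedPt (hs : A0 + A1 + A2 = 1) {x : ℝ}
    (hx : IsFixedPt (quadMap A0 A1 A2) x) : x = 1 ∨ A2 * x = A0 := by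
  have hfac : (x - 1) * (A2 * x - A0) = 0 := by
    unfold IsFixedPt quadMap at hx
    linear_combination hx - x * hs
  rcases mul_eq_zero.mp hfac with h | h
  · exact .inl (by linarith)
  · exact .inr (by linarith)

variable (h0 : 0 ≤ A0) (h1 : 0 ≤ A1) (h2 : 0 ≤ A2) (hs : A0 + A1 + A2 = 1) {L : ℝ}
  (hL : Tendsto (fun n ↦ (quadMap A0 A1 A2)^[n] 0) atTop (𝓝 L))
include h0 h1 h2 hs hL

lemma limit_eq_div_of_lt (hlt : A0 < A2) : L = A0 / A2 := by
  have hA2 : 0 < A2 := h0.trans_lt hlt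
  have hle : L ≤ A0 / A2 := le_of_tendsto' hL <|
    iterate_quadMap_le h0 h1 h2 (by positivity) (quadMap_div hs hA2.ne').le
  have hlt1 : A0 / A2 < 1 := (div_lt_one hA2).mpr hlt
  rcases eq_one_or_mul_eq_of_isFixedPt hs
    (isFixedPt_of_tendsto_iterate hL (continuous_quadMap _ _ _).continuousAt) with h | h
  · linarith
  · rw [eq_div_iff hA2.ne']; linarith

lemma limit_eq_one_iff (hpos : 0 < A0 + A2) : L = 1 ↔ A2 ≤ A0 := by
  refine ⟨fun hL1 ↦ ?_, fun hle ↦ ?_⟩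
  · by_contra! hlt
    have hA2 : 0 < A2 := h0.trans_lt hlt
    have := limit_eq_div_of_lt h0 h1 h2 hs hL hlt
    rw [hL1, eq_div_iff hA2.ne'] at this
    linarith
  · have hL1 : L ≤ 1 := le_of_tendsto' hL <|
      iterate_quadMap_le h0 h1 h2 zero_le_one (quadMap_one hs).le
    rcases eq_one_or_mul_eq_of_isFixedPt hs
      (isFixedPt_of_tendsto_iterate hL (continuous_quadMap _ _ _).continuousAt) with h | h
    · exact h
    -- `A2 * L = A0 ≥ A2 ≥ A2 * L`, and `A2 = 0` would force `A0 = 0`.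
    · have hA2 : 0 < A2 := by nlinarith
      nlinarith

end RealIteration

section Majorant

variable {R : Type*} [NormedCommRing R] {a0 a1 a2 : R} {A0 A1 A2 : ℝ}

lemma norm_quadMap_le (b0 : ‖a0‖ ≤ A0) (b1 : ‖a1‖ ≤ A1) (b2 : ‖a2‖ ≤ A2) {z : R} {x : ℝ}
    (hz : ‖z‖ ≤ x) : ‖quadMap a0 a1 a2 z‖ ≤ quadMap A0 A1 A2 x := by
  have hA1 : 0 ≤ A1 := (norm_nonneg _).trans b1
  have hA2 : 0 ≤ A2 := (norm_nonneg _).trans b2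
  have hx : 0 ≤ x := (norm_nonneg _).trans hz
  calc ‖quadMap a0 a1 a2 z‖ ≤ ‖a0‖ + ‖a1‖ * ‖z‖ + ‖a2‖ * ‖z‖ ^ 2 := by
        unfold quadMap
        refine (norm_add₃_le ..).trans (add_le_add_three le_rfl (norm_mul_le _ _) ?_)
        exact (norm_mul_le _ _).trans (by gcongr; exact norm_pow_le' _ two_pos)
    _ ≤ quadMap A0 A1 A2 x := by unfold quadMap; gcongr

lemma norm_quadMap_sub_le (b1 : ‖a1‖ ≤ A1) (b2 : ‖a2‖ ≤ A2) {z w : R} {x y : ℝ}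
    (hz : ‖z‖ ≤ x) (hw : ‖w‖ ≤ y) (hzw : ‖z - w‖ ≤ x - y) :
    ‖quadMap a0 a1 a2 z - quadMap a0 a1 a2 w‖ ≤ quadMap A0 A1 A2 x - quadMap A0 A1 A2 y := by
  have hA2 : 0 ≤ A2 := (norm_nonneg _).trans b2
  have hfactor : ‖a1 + a2 * (z + w)‖ ≤ A1 + A2 * (x + y) :=
    (norm_add_le_of_le b1 ((norm_mul_le _ _).trans
      (mul_le_mul b2 (norm_add_le_of_le hz hw) (norm_nonneg _) hA2)))
  calc ‖quadMap a0 a1 a2 z - quadMap a0 a1 a2 w‖ = ‖(a1 + a2 * (z + w)) * (z - w)‖ := by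
        unfold quadMap; ring_nf
    _ ≤ (A1 + A2 * (x + y)) * (x - y) :=
        (norm_mul_le _ _).trans (mul_le_mul hfactor hzw (norm_nonneg _)
          ((norm_nonneg _).trans hfactor))
    _ = quadMap A0 A1 A2 x - quadMap A0 A1 A2 y := by unfold quadMap; ring

lemma norm_iterate_quadMap_le (b0 : ‖a0‖ ≤ A0) (b1 : ‖a1‖ ≤ A1) (b2 : ‖a2‖ ≤ A2) (n : ℕ) :
    ‖(quadMap a0 a1 a2)^[n] 0‖ ≤ (quadMap A0 A1 A2)^[n] 0 := by
  induction n with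
  | zero => simp
  | succ n ih =>
    rw [iterate_succ_apply', iterate_succ_apply']
    exact norm_quadMap_le b0 b1 b2 ih

lemma norm_iterate_quadMap_succ_sub_le (b0 : ‖a0‖ ≤ A0) (b1 : ‖a1‖ ≤ A1) (b2 : ‖a2‖ ≤ A2)
    (n : ℕ) : ‖(quadMap a0 a1 a2)^[n + 1] 0 - (quadMap a0 a1 a2)^[n] 0‖
      ≤ (quadMap A0 A1 A2)^[n + 1] 0 - (quadMap A0 A1 A2)^[n] 0 := by
  induction n with
  | zero => simpa [quadMap] using b0
  | succ n ih =>
    have h := norm_quadMap_sub_le (a0 := a0) (A0 := A0) b1 b2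
      (norm_iterate_quadMap_le b0 b1 b2 (n + 1)) (norm_iterate_quadMap_le b0 b1 b2 n) ih
    simpa only [← iterate_succ_apply'] using h

lemma exists_tendsto_iterate_quadMap [CompleteSpace R] (b0 : ‖a0‖ ≤ A0) (b1 : ‖a1‖ ≤ A1)
    (b2 : ‖a2‖ ≤ A2) {c : ℝ} (hc : ∀ n, (quadMap A0 A1 A2)^[n] 0 ≤ c) :
    ∃ θ, Tendsto (fun n ↦ (quadMap a0 a1 a2)^[n] 0) atTop (𝓝 θ) ∧ ‖θ‖ ≤ c ∧
      IsFixedPt (quadMap a0 a1 a2) θ := by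
  obtain ⟨θ, hθ⟩ := cauchySeq_tendsto_of_complete <|
    cauchySeq_of_norm_sub_le_sub (f := fun n ↦ (quadMap a0 a1 a2)^[n] 0) hc
      (norm_iterate_quadMap_succ_sub_le b0 b1 b2)
  refine ⟨θ, hθ, le_of_tendsto' hθ.norm fun n ↦ (norm_iterate_quadMap_le b0 b1 b2 n).trans (hc n),
    isFixedPt_of_tendsto_iterate hθ (continuous_quadMap _ _ _).continuousAt⟩

end Majorant

lemma ofReal_iterate_quadMap (A0 A1 A2 : ℝ) (n : ℕ) :
    (((quadMap A0 A1 A2)^[n] 0 : ℝ) : ℂ) = (quadMap (A0 : ℂ) A1 A2)^[n] 0 := by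
  have h : Semiconj ((↑) : ℝ → ℂ) (quadMap A0 A1 A2) (quadMap (A0 : ℂ) A1 A2) := fun x ↦ by
    simp [quadMap]
  simpa using h.iterate_right n 0

section Symbol

variable {v : Fin 3 → Fin 3 → ℝ}

lemma symbOne_nonneg (hnn : ∀ i j, 0 ≤ v i j) (i : Fin 3) : 0 ≤ symbOne v i := by
  unfold symbOne; linarith [hnn i 0, hnn i 1, hnn i 2]

lemma symbOne_sum (hsum : ∑ i, ∑ j, v i j = 1) :
    symbOne v 0 + symbOne v 1 + symbOne v 2 = 1 := by
  simpa [symbOne, Fin.sum_univ_three, add_assoc] using hsum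

lemma norm_symb_le (hnn : ∀ i j, 0 ≤ v i j) (i : Fin 3) {ζ : ℂ} (hζ : ‖ζ‖ = 1) :
    ‖symb v i ζ‖ ≤ symbOne v i := by
  unfold symb symbOne
  refine (norm_add₃_le ..).trans (le_of_eq ?_)
  simp [hζ, abs_of_nonneg (hnn i _)]

lemma symb_one (v : Fin 3 → Fin 3 → ℝ) (i : Fin 3) : symb v i 1 = symbOne v i := by
  simp [symb, symbOne]

end Symbol

theorem stmt14 (v : Fin 3 → Fin 3 → ℝ) (hnn : ∀ i j, 0 ≤ v i j)
    (hsum : ∑ i, ∑ j, v i j = 1)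
    (ζ : ℂ) (hζ : ‖ζ‖ = 1) :
    ∃ θ : ℂ,
      Tendsto (quadIter (symb v 0 ζ) (symb v 1 ζ) (symb v 2 ζ)) atTop (𝓝 θ) ∧
      ‖θ‖ ≤ 1 ∧
      symb v 2 ζ * θ ^ 2 + (symb v 1 ζ - 1) * θ + symb v 0 ζ = 0 ∧
      (ζ = 1 →
        (symbOne v 0 + symbOne v 2 > 0 → (θ = 1 ↔ symbOne v 0 ≥ symbOne v 2)) ∧
        (symbOne v 0 < symbOne v 2 → θ = ((symbOne v 0 / symbOne v 2 : ℝ) : ℂ))) := by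
  have h0 := symbOne_nonneg hnn 0
  have h1 := symbOne_nonneg hnn 1
  have h2 := symbOne_nonneg hnn 2
  have hs := symbOne_sum hsum
  obtain ⟨θ, hθ, hθ1, hfix⟩ := exists_tendsto_iterate_quadMap (norm_symb_le hnn 0 hζ)
    (norm_symb_le hnn 1 hζ) (norm_symb_le hnn 2 hζ)
    (iterate_quadMap_le h0 h1 h2 zero_le_one (quadMap_one hs).le)
  refine ⟨θ, quadIter_eq_iterate _ _ _ ▸ hθ, hθ1, ?_, fun hζ1 ↦ ?_⟩
  · unfold IsFixedPt quadMap at hfix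
    linear_combination hfix
  subst hζ1
  obtain ⟨L, hL⟩ := tendsto_iterate_quadMap_of_sum_eq_one h0 h1 h2 hs
  have hθL : θ = L := tendsto_nhds_unique hθ <| by
    simpa only [symb_one, ← ofReal_iterate_quadMap] using hL.ofReal
  rw [hθL, ← Complex.ofReal_one, Complex.ofReal_inj, Complex.ofReal_inj, ge_iff_le]
  exact ⟨limit_eq_one_iff h0 h1 h2 hs hL, limit_eq_div_of_lt h0 h1 h2 hs hL⟩
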